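/- Let R be a ring with invariant basis number whose only ring automorphism is the identity. Then every automorphism of the category C_R of finitely generated free left R-modules is inner, i.e., naturally isomorphic to the identity functor. -/

import Mathlib

open CategoryTheory

/-- The category `C_R`: the full subcategory of the category of left `R`-modules whose
objects are the finitely generated free left `R`-modules. -/
def CR (R : Type) [Ring R] : Type 1 :=
  ObjectProperty.FullSubcategory (fun M : ModuleCat.{0} R => Module.Finite R M ∧ Module.Free R M)

instance (R : Type) [Ring R] : Category (CR R) :=
  ObjectProperty.FullSubcategory.category _

/-- A morphism of `C_R` is just an `R`-linear map. -/
def homToLin {R : Type} [Ring R] {F G : CR R} (f : F ⟶ G) : F.obj →ₗ[R] G.obj := f.hom.hom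

/-- An automorphism `φ` of the category `C_R` is *semi-inner* if there are a ring
automorphism `σ` of `R` and additive isomorphisms `s_F : F ≃+ φ(F)`, one for each object
`F` of `C_R`, with `s_F (r • a) = σ r • s_F a`, such that `φ(f) ∘ s_F = s_G ∘ f` for
every `R`-linear map `f : F ⟶ G`. -/
def SemiInner (R : Type) [Ring R] (φ : Aut (Cat.of (CR R))) : Prop :=
  ∃ (σ : R ≃+* R)
    (s : ∀ F : CR R, F.obj ≃+ ((φ.hom.toFunctor : CR R ⥤ CR R).obj F).obj),
    (∀ (F : CR R) (r : R) (a : F.obj), s F (r • a) = σ r • s F a) ∧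
    (∀ (F G : CR R) (f : F ⟶ G) (a : F.obj),
      homToLin ((φ.hom.toFunctor : CR R ⥤ CR R).map f) (s F a) = s G (homToLin f a))

/-!
An equivalence `F` of `C_R` is additive, since it preserves biproducts. Writing
`F R ≅ R^k` and `F⁻¹ R ≅ R^m`, additivity gives `R ≅ F (F⁻¹ R) ≅ R^(mk)`, so `k = 1` by
invariant basis number. Fixing `u : F R ≅ R`, conjugating `F` by `u` is a ring automorphism
of `End R ≅ Rᵐᵒᵖ`, hence trivial: `F f = u ∘ f ∘ u⁻¹` for every `f : R ⟶ R`. Then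
`X ≅ Hom(R, X) ≅ Hom(F R, F X) ≅ Hom(R, F X) ≅ F X` is additive, natural in `X`, and
`R`-linear because `r • -` on `X` corresponds to precomposition with right multiplication
by `r` on `R`.
-/

open Limits

lemma RingEquiv.eq_refl_of_ringEquiv_mulOpposite {R S : Type*} [Semiring R] [Semiring S]
    (hAut : ∀ σ : R ≃+* R, σ = RingEquiv.refl R) (e : S ≃+* Rᵐᵒᵖ) (τ : S ≃+* S) :
    τ = RingEquiv.refl S := by
  ext s
  simpa using congrArg (fun σ : R ≃+* R => σ (e s).unop)
    (hAut (RingEquiv.unop (e.symm.trans (τ.trans e))))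

namespace CategoryTheory

variable {C D : Type*} [Category C] [Preadditive C] [Category D] [Preadditive D]

noncomputable def Functor.FullyFaithful.endRingEquivOfIso {F : C ⥤ D} (hF : F.FullyFaithful)
    [F.Additive] {X : C} {Y : D} (u : F.obj X ≅ Y) : End X ≃+* End Y :=
  { (hF.mulEquivEnd X).trans u.conj with
    map_add' f g := by
      change u.inv ≫ F.map (f + g) ≫ u.hom =
        u.inv ≫ F.map f ≫ u.hom + u.inv ≫ F.map g ≫ u.hom
      rw [F.map_add, Preadditive.add_comp, Preadditive.comp_add] }

lemma Functor.FullyFaithful.map_eq_of_endRingEquivOfIso_eq_refl {F : C ⥤ C}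
    (hF : F.FullyFaithful) [F.Additive] {X : C} {u : F.obj X ≅ X}
    (h : hF.endRingEquivOfIso u = RingEquiv.refl (End X)) (f : X ⟶ X) :
    F.map f = u.hom ≫ f ≫ u.inv := by
  have hf : u.inv ≫ F.map f ≫ u.hom = f := congrArg (· f) h
  calc F.map f = u.hom ≫ (u.inv ≫ F.map f ≫ u.hom) ≫ u.inv := by simp
    _ = u.hom ≫ f ≫ u.inv := by rw [hf]

end CategoryTheory

namespace CR

variable {R : Type} [Ring R]

instance : Preadditive (CR R) :=
  inferInstanceAs (Preadditive (ObjectProperty.FullSubcategory _))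

instance (X : CR R) : Module.Finite R X.obj := X.property.1

instance (X : CR R) : Module.Free R X.obj := X.property.2

abbrev of (R : Type) [Ring R] (M : Type) [AddCommGroup M] [Module R M] [Module.Finite R M]
    [Module.Free R M] : CR R :=
  ⟨ModuleCat.of R M, ⟨‹_›, ‹_›⟩⟩

variable (R) in
abbrev regular : CR R := of R R

abbrev prod (X Y : CR R) : CR R := of R (X.obj × Y.obj)

def ofHom {X Y : CR R} (l : X.obj →ₗ[R] Y.obj) : X ⟶ Y :=
  ObjectProperty.homMk (ModuleCat.ofHom l)

@[ext]
lemma hom_ext {X Y : CR R} {f g : X ⟶ Y} (h : homToLin f = homToLin g) : f = g :=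
  ObjectProperty.hom_ext _ (ModuleCat.hom_ext h)

@[simp]
lemma homToLin_id (X : CR R) : homToLin (𝟙 X) = LinearMap.id := rfl

@[simp]
lemma homToLin_comp {X Y Z : CR R} (f : X ⟶ Y) (g : Y ⟶ Z) :
    homToLin (f ≫ g) = homToLin g ∘ₗ homToLin f := rfl

@[simp]
lemma homToLin_add {X Y : CR R} (f g : X ⟶ Y) :
    homToLin (f + g) = homToLin f + homToLin g := rfl

@[simp]
lemma homToLin_zero (X Y : CR R) : homToLin (0 : X ⟶ Y) = 0 := rfl

lemma homToLin_apply_apply_of_comp {X Y Z : CR R} {f : X ⟶ Y} {g : Y ⟶ Z} {h : X ⟶ Z}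
    (e : f ≫ g = h) (x : X.obj) : homToLin g (homToLin f x) = homToLin h x := by
  rw [← e]; rfl

def isoOfLinearEquiv {X Y : CR R} (e : X.obj ≃ₗ[R] Y.obj) : X ≅ Y :=
  ObjectProperty.isoMk _ e.toModuleIso

def linearEquivOfIso {X Y : CR R} (i : X ≅ Y) : X.obj ≃ₗ[R] Y.obj :=
  ((ObjectProperty.ι _).mapIso i).toLinearEquiv

lemma isZero_iff_subsingleton (X : CR R) : IsZero X ↔ Subsingleton X.obj := by
  rw [← ModuleCat.isZero_iff_subsingleton]
  exact ⟨(ObjectProperty.ι _).map_isZero,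
    IsZero.of_full_of_faithful_of_isZero (ObjectProperty.ι _) X⟩

lemma exists_linearEquiv_fin (X : CR R) : ∃ n : ℕ, Nonempty (X.obj ≃ₗ[R] (Fin n → R)) :=
  let b := Module.Free.chooseBasis R X.obj
  ⟨_, ⟨b.equivFun ≪≫ₗ LinearEquiv.funCongrLeft R R (Fintype.equivFin _).symm⟩⟩

def prodBicone (X Y : CR R) : BinaryBicone X Y where
  pt := prod X Y
  fst := ofHom (LinearMap.fst R X.obj Y.obj)
  snd := ofHom (LinearMap.snd R X.obj Y.obj)
  inl := ofHom (LinearMap.inl R X.obj Y.obj)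
  inr := ofHom (LinearMap.inr R X.obj Y.obj)

lemma prodBicone_total (X Y : CR R) :
    (prodBicone X Y).fst ≫ (prodBicone X Y).inl + (prodBicone X Y).snd ≫ (prodBicone X Y).inr
      = 𝟙 _ := by
  ext ⟨x, y⟩
  exact Prod.ext (add_zero x) (zero_add y)

instance : HasBinaryBiproducts (CR R) :=
  ⟨fun X Y => HasBinaryBiproduct.mk ⟨_, isBinaryBilimitOfTotal _ (prodBicone_total X Y)⟩⟩

def linearEquivProdOfTotal {X Y : CR R} (c : BinaryBicone X Y)
    (h : c.fst ≫ c.inl + c.snd ≫ c.inr = 𝟙 c.pt) : c.pt.obj ≃ₗ[R] X.obj × Y.obj :=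
  LinearEquiv.ofLinearMap (.prod (homToLin c.fst) (homToLin c.snd))
    (.coprod (homToLin c.inl) (homToLin c.inr))
    (by
      ext x <;>
        simp [homToLin_apply_apply_of_comp c.inl_fst, homToLin_apply_apply_of_comp c.inl_snd,
          homToLin_apply_apply_of_comp c.inr_fst, homToLin_apply_apply_of_comp c.inr_snd])
    (by
      have h' := congrArg homToLin h
      simp only [homToLin_add, homToLin_comp, homToLin_id] at h'
      rw [← h']
      ext x
      simp)

def linearEquivMapProd (F : CR R ⥤ CR R) [F.Additive] (X Y : CR R) :
    (F.obj (prod X Y)).obj ≃ₗ[R] (F.obj X).obj × (F.obj Y).obj :=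
  linearEquivProdOfTotal (F.mapBinaryBicone (prodBicone X Y)) (by
    have h := congrArg F.map (prodBicone_total X Y)
    rw [F.map_add, F.map_comp, F.map_comp, F.map_id] at h
    exact h)

def piFinProdLinearEquiv (m n : ℕ) : ((Fin m → R) × (Fin n → R)) ≃ₗ[R] (Fin (m + n) → R) :=
  (LinearEquiv.sumArrowLequivProdArrow _ _ R R).symm ≪≫ₗ
    LinearEquiv.funCongrLeft R R finSumFinEquiv.symm

lemma nonempty_map_linearEquiv_pi_mul (F : CR R ⥤ CR R) [F.Additive] {k : ℕ}
    (ek : (F.obj (regular R)).obj ≃ₗ[R] (Fin k → R)) :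
    ∀ (n : ℕ) (X : CR R), (X.obj ≃ₗ[R] (Fin n → R)) →
      Nonempty ((F.obj X).obj ≃ₗ[R] (Fin (n * k) → R))
  | 0, X, e => by
    have : Subsingleton X.obj := e.toEquiv.subsingleton
    have : Subsingleton (F.obj X).obj :=
      (isZero_iff_subsingleton _).1 (F.map_isZero ((isZero_iff_subsingleton X).2 ‹_›))
    rw [Nat.zero_mul]
    exact ⟨LinearEquiv.ofSubsingleton _ _⟩
  | n + 1, X, e => by
    obtain ⟨e'⟩ := nonempty_map_linearEquiv_pi_mul F ek n (of R (Fin n → R)) (.refl _ _)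
    let i : X ≅ prod (regular R) (of R (Fin n → R)) :=
      isoOfLinearEquiv (e ≪≫ₗ (Fin.consLinearEquiv R fun _ => R).symm)
    rw [show (n + 1) * k = k + n * k by ring]
    exact ⟨linearEquivOfIso (F.mapIso i) ≪≫ₗ linearEquivMapProd F _ _ ≪≫ₗ ek.prodCongr e' ≪≫ₗ
      piFinProdLinearEquiv _ _⟩

lemma nonempty_map_regular_linearEquiv
    (hIBN : ∀ n m : ℕ, Nonempty ((Fin n → R) ≃ₗ[R] (Fin m → R)) → n = m)
    (F : CR R ⥤ CR R) [F.Additive] [F.EssSurj] :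
    Nonempty ((F.obj (regular R)).obj ≃ₗ[R] R) := by
  obtain ⟨k, ⟨ek⟩⟩ := exists_linearEquiv_fin (F.obj (regular R))
  obtain ⟨m, ⟨em⟩⟩ := exists_linearEquiv_fin (F.objPreimage (regular R))
  obtain ⟨e⟩ := nonempty_map_linearEquiv_pi_mul F ek m _ em
  have hmk : 1 = m * k := hIBN 1 (m * k)
    ⟨LinearEquiv.funUnique (Fin 1) R R ≪≫ₗ
      (linearEquivOfIso (F.objObjPreimageIso (regular R))).symm ≪≫ₗ e⟩
  obtain rfl : k = 1 := Nat.eq_one_of_mul_eq_one_left hmk.symm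
  exact ⟨ek ≪≫ₗ LinearEquiv.funUnique (Fin 1) R R⟩

def endRingEquiv (X : CR R) : End X ≃+* Module.End R X.obj where
  toFun := homToLin
  invFun := ofHom
  left_inv _ := rfl
  right_inv _ := rfl
  map_mul' _ _ := rfl
  map_add' _ _ := rfl

def homRegularAddEquiv (X : CR R) : (regular R ⟶ X) ≃+ X.obj where
  toFun f := homToLin f 1
  invFun x := ofHom (LinearMap.toSpanSingleton R X.obj x)
  left_inv _ := hom_ext (LinearMap.ext_ring (one_smul R _))
  right_inv x := one_smul R x
  map_add' _ _ := rfl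

lemma homRegularAddEquiv_comp {X Y : CR R} (g : regular R ⟶ X) (f : X ⟶ Y) :
    homRegularAddEquiv Y (g ≫ f) = homToLin f (homRegularAddEquiv X g) := rfl

lemma homRegularAddEquiv_symm_comp (X : CR R) (r : R) (g : regular R ⟶ X) :
    homRegularAddEquiv X ((homRegularAddEquiv (regular R)).symm r ≫ g) =
      r • homRegularAddEquiv X g := by
  change homToLin g ((1 : R) • r) = r • homToLin g 1
  rw [one_smul, ← map_smul, smul_eq_mul, mul_one]

section

variable {F : CR R ⥤ CR R} (hF : F.FullyFaithful) [F.Additive]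
  (u : F.obj (regular R) ≅ regular R)

def mapAddEquiv (X : CR R) : X.obj ≃+ (F.obj X).obj :=
  (homRegularAddEquiv X).symm.trans <|
    ({ hF.homEquiv with map_add' := fun _ _ => F.map_add } : (regular R ⟶ X) ≃+ _).trans <|
      ({ u.homFromEquiv with map_add' := fun _ _ => Preadditive.comp_add _ _ _ _ _ _ } :
        (F.obj (regular R) ⟶ F.obj X) ≃+ (regular R ⟶ F.obj X)).trans
        (homRegularAddEquiv (F.obj X))

lemma mapAddEquiv_apply (X : CR R) (x : X.obj) :
    mapAddEquiv hF u X x =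
      homRegularAddEquiv _ (u.inv ≫ F.map ((homRegularAddEquiv X).symm x)) := rfl

lemma mapAddEquiv_naturality {X Y : CR R} (f : X ⟶ Y) (x : X.obj) :
    mapAddEquiv hF u Y (homToLin f x) = homToLin (F.map f) (mapAddEquiv hF u X x) := by
  have : (homRegularAddEquiv Y).symm (homToLin f x) = (homRegularAddEquiv X).symm x ≫ f :=
    (homRegularAddEquiv Y).symm_apply_eq.2 (by
      rw [homRegularAddEquiv_comp, AddEquiv.apply_symm_apply])
  rw [mapAddEquiv_apply, mapAddEquiv_apply, this, F.map_comp, ← Category.assoc,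
    homRegularAddEquiv_comp]

lemma mapAddEquiv_smul (hconj : ∀ f : regular R ⟶ regular R, F.map f = u.hom ≫ f ≫ u.inv)
    (X : CR R) (r : R) (x : X.obj) :
    mapAddEquiv hF u X (r • x) = r • mapAddEquiv hF u X x := by
  have : (homRegularAddEquiv X).symm (r • x) =
      (homRegularAddEquiv (regular R)).symm r ≫ (homRegularAddEquiv X).symm x :=
    (homRegularAddEquiv X).symm_apply_eq.2 (by
      rw [homRegularAddEquiv_symm_comp, AddEquiv.apply_symm_apply])
  rw [mapAddEquiv_apply, mapAddEquiv_apply, this, F.map_comp, hconj]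
  simpa using homRegularAddEquiv_symm_comp _ r (u.inv ≫ F.map ((homRegularAddEquiv X).symm x))

def isoIdOfMapEq (hconj : ∀ f : regular R ⟶ regular R, F.map f = u.hom ≫ f ≫ u.inv) :
    F ≅ 𝟭 (CR R) :=
  (NatIso.ofComponents
    (fun X => isoOfLinearEquiv
      ((mapAddEquiv hF u X).toLinearEquiv (mapAddEquiv_smul hF u hconj X)))
    (fun f => hom_ext (LinearMap.ext fun x => mapAddEquiv_naturality hF u f x))).symm

end

theorem nonempty_iso_id_of_isEquivalence
    (hIBN : ∀ n m : ℕ, Nonempty ((Fin n → R) ≃ₗ[R] (Fin m → R)) → n = m)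
    (hAut : ∀ σ : R ≃+* R, σ = RingEquiv.refl R) (F : CR R ⥤ CR R) [F.IsEquivalence] :
    Nonempty (F ≅ 𝟭 (CR R)) := by
  have : F.Additive := Functor.additive_of_preserves_binary_products F
  let hF := Functor.FullyFaithful.ofFullyFaithful F
  obtain ⟨e⟩ := nonempty_map_regular_linearEquiv hIBN F
  let u : F.obj (regular R) ≅ regular R := isoOfLinearEquiv e
  have hu : hF.endRingEquivOfIso u = RingEquiv.refl _ :=
    RingEquiv.eq_refl_of_ringEquiv_mulOpposite hAut
      ((endRingEquiv (regular R)).trans (RingEquiv.moduleEndSelf R).symm) _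
  exact ⟨isoIdOfMapEq hF u (hF.map_eq_of_endRingEquivOfIso_eq_refl hu)⟩

end CR

/-- if `R` is a ring with invariant basis number whose only ring
automorphism is the identity, then every automorphism of the category `C_R` of finitely
generated free left `R`-modules is inner (naturally isomorphic to the identity). -/
theorem stmt9 (R : Type) [Ring R]
    (hIBN : ∀ n m : ℕ, Nonempty ((Fin n → R) ≃ₗ[R] (Fin m → R)) → n = m)
    (hAut : ∀ σ : R ≃+* R, σ = RingEquiv.refl R)
    (φ : Aut (Cat.of (CR R))) :
    Nonempty ((φ.hom.toFunctor : CR R ⥤ CR R) ≅ 𝟭 (CR R)) :=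
  @CR.nonempty_iso_id_of_isEquivalence R _ hIBN hAut _ (Cat.equivOfIso φ).isEquivalence_functor
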